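/- Let φ be antisymmetric and monotone in the difference, α > 0, ρ : V → ℝ, and suppose x, y : V → ℝ both satisfy the equilibrium Σ_{j∈Nbr(i)} φ(·) + ρ(i) - α·(·)(i) = 0. Then α·‖x - y‖² = ⟨Φx - Φy, x - y⟩ where Φ is the transport operator; combining with ⟨Φx - Φy, x - y⟩ ≤ 0 gives x = y. -/

import Mathlib

/-!
Subtracting the two equilibrium equations gives `Φ x - Φ y = α (x - y)` pointwise, whence the
identity. Summing over edges twice, once from each endpoint, and using antisymmetry of `φ`,
`2 ⟨Φ x - Φ y, x - y⟩` is a sum of terms `(φ(x_j, x_i) - φ(y_j, y_i)) ((x-y)_i - (x-y)_j)`, each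
nonpositive by monotonicity of `φ` in the difference of its arguments. So
`α ‖x - y‖² ≤ 0`, and `α > 0` forces `x = y`.
-/

open Finset

theorem flux_sub_mul_sub_nonneg {φ : ℝ → ℝ → ℝ}
    (hmono : ∀ x y v w : ℝ, x - y ≤ v - w → φ x y ≤ φ v w) (a b c d : ℝ) :
    0 ≤ (φ a b - φ c d) * ((a - b) - (c - d)) := by
  rcases le_total (a - b) (c - d) with h | h
  · exact mul_nonneg_of_nonpos_of_nonpos (sub_nonpos.2 (hmono _ _ _ _ h)) (sub_nonpos.2 h)
  · exact mul_nonneg (sub_nonneg.2 (hmono _ _ _ _ h)) (sub_nonneg.2 h)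

namespace SimpleGraph

variable {V : Type} [Fintype V] (G : SimpleGraph V) [DecidableRel G.Adj]

theorem sum_sum_neighborFinset_swap {M : Type*} [AddCommMonoid M] (g : V → V → M) :
    ∑ i, ∑ j ∈ G.neighborFinset i, g i j = ∑ i, ∑ j ∈ G.neighborFinset i, g j i := by
  simp only [neighborFinset_eq_filter, sum_filter]
  rw [sum_comm]
  simp only [G.adj_comm]

theorem two_mul_sum_sum_neighborFinset_of_antisymm (c : V → V → ℝ)
    (hc : ∀ i j, c i j = -c j i) (b : V → ℝ) :
    2 * ∑ i, ∑ j ∈ G.neighborFinset i, c i j * b i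
      = ∑ i, ∑ j ∈ G.neighborFinset i, c i j * (b i - b j) := by
  have hswap : ∑ i, ∑ j ∈ G.neighborFinset i, c i j * b i
      = -∑ i, ∑ j ∈ G.neighborFinset i, c i j * b j := by
    rw [G.sum_sum_neighborFinset_swap fun i j => c i j * b i, ← sum_neg_distrib]
    exact sum_congr rfl fun i _ => by
      rw [← sum_neg_distrib]; exact sum_congr rfl fun j _ => by rw [hc j i]; ring
  simp only [mul_sub, sum_sub_distrib]
  linarith

def transport (φ : ℝ → ℝ → ℝ) (d : V → ℝ) (i : V) : ℝ :=
  ∑ j ∈ G.neighborFinset i, φ (d j) (d i)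

theorem sum_transport_sub_mul_sub_nonpos {φ : ℝ → ℝ → ℝ} (hanti : ∀ x y, φ x y = -φ y x)
    (hmono : ∀ x y v w : ℝ, x - y ≤ v - w → φ x y ≤ φ v w) (x y : V → ℝ) :
    ∑ i, (G.transport φ x i - G.transport φ y i) * (x i - y i) ≤ 0 := by
  set c : V → V → ℝ := fun i j => φ (x j) (x i) - φ (y j) (y i)
  have hc : ∀ i j, c i j = -c j i := fun i j => by
    simp only [c, hanti (x j), hanti (y j)]; ring
  have hsum : ∑ i, (G.transport φ x i - G.transport φ y i) * (x i - y i)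
      = ∑ i, ∑ j ∈ G.neighborFinset i, c i j * (x i - y i) := by
    simp only [transport, c, ← sum_sub_distrib, sum_mul]
  have hterm : ∀ i j, c i j * ((x i - y i) - (x j - y j)) ≤ 0 := fun i j => by
    simp only [c]
    linear_combination flux_sub_mul_sub_nonneg hmono (x j) (x i) (y j) (y i)
  have h2 := G.two_mul_sum_sum_neighborFinset_of_antisymm c hc (fun i => x i - y i)
  rw [← hsum] at h2
  have : ∑ i, ∑ j ∈ G.neighborFinset i, c i j * ((x i - y i) - (x j - y j)) ≤ 0 :=
    sum_nonpos fun i _ => sum_nonpos fun j _ => hterm i j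
  linarith

end SimpleGraph

theorem eq_of_sum_sub_sq_eq_zero {V : Type} [Fintype V] {x y : V → ℝ}
    (h : ∑ i, (x i - y i) ^ 2 = 0) : x = y := by
  funext i
  have hi := (sum_eq_zero_iff_of_nonneg fun i _ => sq_nonneg (x i - y i)).1 h i (mem_univ i)
  exact sub_eq_zero.1 (pow_eq_zero_iff two_ne_zero |>.1 hi)

theorem stmt_19_general {V : Type} [Fintype V]
    (G : SimpleGraph V) [DecidableRel G.Adj]
    (φ : ℝ → ℝ → ℝ)
    (hanti : ∀ x y, φ x y = -φ y x)
    (hmono : ∀ x y v w : ℝ, x - y ≤ v - w → φ x y ≤ φ v w)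
    (α : ℝ) (hα : 0 < α) (ρ : V → ℝ)
    (Φ : (V → ℝ) → V → ℝ)
    (hΦ : ∀ d i, Φ d i = ∑ j ∈ G.neighborFinset i, φ (d j) (d i))
    (x y : V → ℝ)
    (hx : ∀ i, Φ x i + ρ i - α * x i = 0)
    (hy : ∀ i, Φ y i + ρ i - α * y i = 0) :
    α * (∑ i, (x i - y i) ^ 2) = ∑ i, (Φ x i - Φ y i) * (x i - y i) ∧ x = y := by
  have hΦ_eq : Φ = G.transport φ := funext₂ hΦ
  subst hΦ_eq
  have hdiff : ∀ i, G.transport φ x i - G.transport φ y i = α * (x i - y i) := fun i => by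
    linarith [hx i, hy i]
  have hid : α * (∑ i, (x i - y i) ^ 2)
      = ∑ i, (G.transport φ x i - G.transport φ y i) * (x i - y i) := by
    rw [mul_sum]
    exact sum_congr rfl fun i _ => by rw [hdiff i]; ring
  refine ⟨hid, eq_of_sum_sub_sq_eq_zero (le_antisymm ?_ (sum_nonneg fun i _ => sq_nonneg _))⟩
  exact nonpos_of_mul_nonpos_right (hid ▸ G.sum_transport_sub_mul_sub_nonpos hanti hmono x y) hα

theorem stmt_19 {V : Type} [Fintype V] [DecidableEq V]
    (G : SimpleGraph V) [DecidableRel G.Adj]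
    (φ : ℝ → ℝ → ℝ)
    (hanti : ∀ x y, φ x y = -φ y x)
    (hmono : ∀ x y v w : ℝ, x - y ≤ v - w → φ x y ≤ φ v w)
    (α : ℝ) (hα : 0 < α) (ρ : V → ℝ)
    (Φ : (V → ℝ) → V → ℝ)
    (hΦ : ∀ d i, Φ d i = ∑ j ∈ G.neighborFinset i, φ (d j) (d i))
    (x y : V → ℝ)
    (hx : ∀ i, Φ x i + ρ i - α * x i = 0)
    (hy : ∀ i, Φ y i + ρ i - α * y i = 0) :
    α * (∑ i, (x i - y i) ^ 2) = ∑ i, (Φ x i - Φ y i) * (x i - y i) ∧ x = y :=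
  stmt_19_general G φ hanti hmono α hα ρ Φ hΦ x y hx hy
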